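/- arXiv:1902.09182 — 5 statements merged into one kernel-verified Lean document; each statement's English description precedes it below -/
import Mathlib

section
/- Let i : A → B be a graph map such that there exist a ∈ V(A) and b ∈ V(B) ∖ i(V(A)) with i(a)b ∈ E(B) (this holds whenever i is not an isomorphism and B is not the disjoint union of i(A) and B − i(A)). Then for every n ≥ 1 there is no graph map r : B × I_n → (A×I_n) ⊔_i B with r ∘ j equal to the identity of (A×I_n) ⊔_i B. -/
/-- A graph: vertex type `V` with a symmetric adjacency relation; loops are allowed. -/
structure LoopGraph (V : Type) : Type where
  adj : V → V → Prop
  symm : ∀ {x y : V}, adj x y → adj y x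

/-- A graph map: a vertex function preserving edges. -/
def IsGraphHom {V W : Type} (G : LoopGraph V) (H : LoopGraph W) (f : V → W) : Prop :=
  ∀ ⦃x y : V⦄, G.adj x y → H.adj (f x) (f y)

/-- The categorical product of graphs. -/
def LoopGraph.prod {V W : Type} (G : LoopGraph V) (H : LoopGraph W) : LoopGraph (V × W) where
  adj p q := G.adj p.1 q.1 ∧ H.adj p.2 q.2
  symm h := ⟨G.symm h.1, H.symm h.2⟩

/-- The graph `I_n` on vertices `{0,…,n}` with `i ~ j` iff `|i-j| ≤ 1` (all vertices looped). -/
def pathI (n : ℕ) : LoopGraph (Fin (n + 1)) where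
  adj i j := (i : ℕ) ≤ (j : ℕ) + 1 ∧ (j : ℕ) ≤ (i : ℕ) + 1
  symm h := ⟨h.2, h.1⟩

/-- `f` and `g` are ×-homotopic. -/
def Homotopic {V W : Type} (G : LoopGraph V) (H : LoopGraph W) (f g : V → W) : Prop :=
  ∃ (n : ℕ) (F : V × Fin (n + 1) → W),
    IsGraphHom (G.prod (pathI n)) H F ∧ (∀ a, F (a, 0) = f a) ∧ (∀ a, F (a, Fin.last n) = g a)

/-- `f` is a ×-homotopy equivalence. -/
def IsHtpyEquiv {V W : Type} (G : LoopGraph V) (H : LoopGraph W) (f : V → W) : Prop :=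
  IsGraphHom G H f ∧ ∃ g : W → V, IsGraphHom H G g ∧
    Homotopic G G (g ∘ f) id ∧ Homotopic H H (f ∘ g) id

/-- A graph is connected if any two vertices are joined by a path of edges. -/
def LoopGraph.Connected {V : Type} (G : LoopGraph V) : Prop :=
  ∀ x y : V, Relation.ReflTransGen G.adj x y

/-- `i : A → B` is an unfold: an induced-subgraph inclusion adding exactly one new vertex `v`
with `N(v) ⊆ N(i v')` for some vertex `v'` of `A`. -/
def IsUnfold {A B : Type} (GA : LoopGraph A) (GB : LoopGraph B) (i : A → B) : Prop :=
  Function.Injective i ∧ (∀ x y : A, GA.adj x y ↔ GB.adj (i x) (i y)) ∧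
  ∃ v : B, v ∉ Set.range i ∧ (∀ b : B, b ∉ Set.range i → b = v) ∧
    ∃ v' : A, ∀ b : B, GB.adj v b → GB.adj (i v') b

/-- Relation generating the pushout of `i : A → B` along `f : A → C`. -/
def pushoutRel {A B C : Type} (i : A → B) (f : A → C) : B ⊕ C → B ⊕ C → Prop :=
  fun x y => ∃ a : A, x = Sum.inl (i a) ∧ y = Sum.inr (f a)

/-- Vertex set of the pushout. -/
def Pushout {A B C : Type} (i : A → B) (f : A → C) : Type :=
  Quot (pushoutRel i f)

/-- Adjacency on a disjoint union. -/
def sumAdj {B C : Type} (GB : LoopGraph B) (GC : LoopGraph C) (x y : B ⊕ C) : Prop :=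
  (∃ b b', x = Sum.inl b ∧ y = Sum.inl b' ∧ GB.adj b b') ∨
  (∃ c c', x = Sum.inr c ∧ y = Sum.inr c' ∧ GC.adj c c')

/-- The pushout graph of `i : A → B` along `f : A → C`: classes are adjacent iff some
representatives are adjacent in `B` or in `C`. -/
def pushoutGraph {A B C : Type} (GB : LoopGraph B) (GC : LoopGraph C) (i : A → B) (f : A → C) :
    LoopGraph (Pushout i f) where
  adj x y := ∃ u v : B ⊕ C,
    Quot.mk (pushoutRel i f) u = x ∧ Quot.mk (pushoutRel i f) v = y ∧ sumAdj GB GC u v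
  symm := by
    rintro x y ⟨u, v, hu, hv, h⟩
    refine ⟨v, u, hv, hu, ?_⟩
    rcases h with ⟨b, b', rfl, rfl, hbb⟩ | ⟨c, c', rfl, rfl, hcc⟩
    · exact Or.inl ⟨b', b, rfl, rfl, GB.symm hbb⟩
    · exact Or.inr ⟨c', c, rfl, rfl, GC.symm hcc⟩

/-- The cobase change `C → B ⊔_A C` of `i` along `f`. -/
def cobase {A B C : Type} (i : A → B) (f : A → C) : C → Pushout i f :=
  fun c => Quot.mk (pushoutRel i f) (Sum.inr c)

/-- The map `a ↦ (a,0)` into the cylinder `A × I_n`. -/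
def cyl0 {A : Type} (n : ℕ) : A → A × Fin (n + 1) := fun a => (a, 0)

/-- The canonical map `(A × I_n) ⊔_i B → B × I_n`, induced by `(a,t) ↦ (i a, t)`, `b ↦ (b,0)`. -/
def cylJ {A B : Type} (i : A → B) (n : ℕ) : Pushout (cyl0 (A := A) n) i → B × Fin (n + 1) :=
  Quot.lift (Sum.elim (fun p => (i p.1, p.2)) (fun b => (b, (0 : Fin (n + 1)))))
    (by rintro x y ⟨a, rfl, rfl⟩; rfl)

/-- `i : A → B` has the homotopy extension property for homotopies of length `n`. -/
def HEP {A B : Type} (GA : LoopGraph A) (GB : LoopGraph B) (i : A → B) (n : ℕ) : Prop :=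
  ∀ (Z : Type) (GZ : LoopGraph Z) (f : A → Z) (g : B → Z),
    IsGraphHom GA GZ f → IsGraphHom GB GZ g → (∀ a, g (i a) = f a) →
    ∀ F : A × Fin (n + 1) → Z, IsGraphHom (GA.prod (pathI n)) GZ F → (∀ a, F (a, 0) = f a) →
    ∃ G : B × Fin (n + 1) → Z, IsGraphHom (GB.prod (pathI n)) GZ G ∧
      (∀ b, G (b, 0) = g b) ∧ (∀ a t, G (i a, t) = F (a, t))

/-- `FoldsTo G S`: the graph `G` can be reduced by a finite sequence of folds to the
induced subgraph on the vertex set `S`. -/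
inductive FoldsTo {V : Type} (G : LoopGraph V) : Set V → Prop
  | univ : FoldsTo G Set.univ
  | step {S : Set V} {v v' : V} : FoldsTo G S → v ∈ S → v' ∈ S → v ≠ v' →
      (∀ x ∈ S, G.adj v x → G.adj v' x) → FoldsTo G (S \ {v})

/-- `RelFoldsTo G A S`: `G` can be reduced to the induced subgraph on `S` by a finite
sequence of folds relative to `A` (never removing a vertex of `A`). -/
inductive RelFoldsTo {V : Type} (G : LoopGraph V) (A : Set V) : Set V → Prop
  | univ : RelFoldsTo G A Set.univ
  | step {S : Set V} {v v' : V} : RelFoldsTo G A S → v ∈ S → v ∉ A → v' ∈ S → v ≠ v' →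
      (∀ x ∈ S, G.adj v x → G.adj v' x) → RelFoldsTo G A (S \ {v})

/-- `p : X → Y` has the right lifting property with respect to every unfold. -/
def RLPunfolds {X Y : Type} (GX : LoopGraph X) (GY : LoopGraph Y) (p : X → Y) : Prop :=
  ∀ (A B : Type) (GA : LoopGraph A) (GB : LoopGraph B) (i : A → B), IsUnfold GA GB i →
    ∀ (f : A → X) (g : B → Y), IsGraphHom GA GX f → IsGraphHom GB GY g →
      (∀ a, p (f a) = g (i a)) →
      ∃ h : B → X, IsGraphHom GB GX h ∧ (∀ a, h (i a) = f a) ∧ ∀ b, p (h b) = g b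

/-- The graph `L_n`: the path `0 - 1 - ⋯ - n` with a loop at `0`. -/
def Lgraph (t : ℕ) : LoopGraph (Fin (t + 1)) where
  adj x y := ((x : ℕ) + 1 = (y : ℕ) ∨ (y : ℕ) + 1 = (x : ℕ)) ∨ ((x : ℕ) = 0 ∧ (y : ℕ) = 0)
  symm := by tauto

/-- The graph `I_0`: a single looped vertex. -/
def I0 : LoopGraph Unit where
  adj _ _ := True
  symm h := h

/-- The constant graph map `p_n : L_n → I_0`. -/
def pL (n : ℕ) : Fin (n + 1) → Unit := fun _ => ()

/-- An object of the category of finite graphs. -/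
structure FinGraph : Type where
  n : ℕ
  G : LoopGraph (Fin n)

/-- A class of morphisms in the category of finite graphs. -/
def MorClass : Type :=
  ∀ (A B : FinGraph), (Fin A.n → Fin B.n) → Prop

/-- `f : A → B` is a retract of `g : X → Y` in the arrow category. -/
def IsRetractOf (A B X Y : FinGraph) (f : Fin A.n → Fin B.n) (g : Fin X.n → Fin Y.n) : Prop :=
  ∃ (iA : Fin A.n → Fin X.n) (rA : Fin X.n → Fin A.n)
    (iB : Fin B.n → Fin Y.n) (rB : Fin Y.n → Fin B.n),
    IsGraphHom A.G X.G iA ∧ IsGraphHom X.G A.G rA ∧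
    IsGraphHom B.G Y.G iB ∧ IsGraphHom Y.G B.G rB ∧
    (∀ a, rA (iA a) = a) ∧ (∀ b, rB (iB b) = b) ∧
    (∀ a, g (iA a) = iB (f a)) ∧ (∀ x, f (rA x) = rB (g x))

/-- A class of morphisms is closed under retracts. -/
def RetractClosed (S : MorClass) : Prop :=
  ∀ (A B X Y : FinGraph) (f : Fin A.n → Fin B.n) (g : Fin X.n → Fin Y.n),
    IsGraphHom A.G B.G f → IsGraphHom X.G Y.G g →
    IsRetractOf A B X Y f g → S X Y g → S A B f

/-- `i` has the left lifting property with respect to `p` (in the category of finite graphs). -/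
def HasLift (A B X Y : FinGraph) (i : Fin A.n → Fin B.n) (p : Fin X.n → Fin Y.n) : Prop :=
  ∀ (f : Fin A.n → Fin X.n) (g : Fin B.n → Fin Y.n),
    IsGraphHom A.G X.G f → IsGraphHom B.G Y.G g → (∀ a, p (f a) = g (i a)) →
    ∃ h : Fin B.n → Fin X.n, IsGraphHom B.G X.G h ∧ (∀ a, h (i a) = f a) ∧ ∀ b, p (h b) = g b

/-- A model structure on the category of finite graphs: classes `W`, `Cof`, `Fib` of graph maps,
each closed under retracts, with two-out-of-three for `W`, the lifting axioms, and the two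
factorization axioms. -/
structure ModelStructure (W Cof Fib : MorClass) : Prop where
  w_hom : ∀ A B f, W A B f → IsGraphHom A.G B.G f
  c_hom : ∀ A B f, Cof A B f → IsGraphHom A.G B.G f
  f_hom : ∀ A B f, Fib A B f → IsGraphHom A.G B.G f
  w_retract : RetractClosed W
  c_retract : RetractClosed Cof
  f_retract : RetractClosed Fib
  two_of_three_comp : ∀ (A B D : FinGraph) (f : Fin A.n → Fin B.n) (g : Fin B.n → Fin D.n),
    IsGraphHom A.G B.G f → IsGraphHom B.G D.G g → W A B f → W B D g → W A D (g ∘ f)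
  two_of_three_right : ∀ (A B D : FinGraph) (f : Fin A.n → Fin B.n) (g : Fin B.n → Fin D.n),
    IsGraphHom A.G B.G f → IsGraphHom B.G D.G g → W A B f → W A D (g ∘ f) → W B D g
  two_of_three_left : ∀ (A B D : FinGraph) (f : Fin A.n → Fin B.n) (g : Fin B.n → Fin D.n),
    IsGraphHom A.G B.G f → IsGraphHom B.G D.G g → W B D g → W A D (g ∘ f) → W A B f
  lift_cw_f : ∀ (A B X Y : FinGraph) (i : Fin A.n → Fin B.n) (p : Fin X.n → Fin Y.n),
    Cof A B i → W A B i → Fib X Y p → HasLift A B X Y i p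
  lift_c_fw : ∀ (A B X Y : FinGraph) (i : Fin A.n → Fin B.n) (p : Fin X.n → Fin Y.n),
    Cof A B i → Fib X Y p → W X Y p → HasLift A B X Y i p
  fact_c_fw : ∀ (A B : FinGraph) (f : Fin A.n → Fin B.n), IsGraphHom A.G B.G f →
    ∃ (Z : FinGraph) (c : Fin A.n → Fin Z.n) (p : Fin Z.n → Fin B.n),
      Cof A Z c ∧ Fib Z B p ∧ W Z B p ∧ ∀ a, p (c a) = f a
  fact_cw_f : ∀ (A B : FinGraph) (f : Fin A.n → Fin B.n), IsGraphHom A.G B.G f →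
    ∃ (Z : FinGraph) (c : Fin A.n → Fin Z.n) (p : Fin Z.n → Fin B.n),
      Cof A Z c ∧ W A Z c ∧ Fib Z B p ∧ ∀ a, p (c a) = f a

/-- The class of ×-homotopy equivalences of finite graphs. -/
def Whe : MorClass := fun A B f => IsHtpyEquiv A.G B.G f

/-!
A retraction `r` would send the edge `(b, 0) ~ (i a, 1)` of `B × I_n` to an edge joining the
class of `b ∈ B` to the class of `(a, 1) ∈ A × I_n`. But the pushout only has edges inside
`A × I_n` or inside `B`, and neither class has a representative on the other side: `b ∉ i(A)`,
and `1 ≠ 0`.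
-/

section Cylinder

variable {A B : Type} {i : A → B} {n : ℕ}

theorem cylJ_mk_inl (p : A × Fin (n + 1)) :
    cylJ i n (Quot.mk _ (Sum.inl p)) = (i p.1, p.2) := rfl

theorem cylJ_mk_inr (b : B) : cylJ i n (Quot.mk _ (Sum.inr b)) = (b, 0) := rfl

theorem Pushout.isRight_of_mk_eq_mk_inr {b : B} (hb : b ∉ Set.range i)
    {u : (A × Fin (n + 1)) ⊕ B}
    (hu : Quot.mk _ u = Quot.mk (pushoutRel (cyl0 n) i) (Sum.inr b)) :
    u.isRight := by
  have hju := congrArg (cylJ i n) hu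
  rcases u with p | b'
  · rw [cylJ_mk_inl, cylJ_mk_inr, Prod.mk.injEq] at hju
    exact absurd ⟨p.1, hju.1⟩ hb
  · rfl

theorem Pushout.isLeft_of_mk_eq_mk_inl {p : A × Fin (n + 1)} (hp : p.2 ≠ 0)
    {v : (A × Fin (n + 1)) ⊕ B}
    (hv : Quot.mk _ v = Quot.mk (pushoutRel (cyl0 n) i) (Sum.inl p)) :
    v.isLeft := by
  have hjv := congrArg (cylJ i n) hv
  rcases v with q | c
  · rfl
  · rw [cylJ_mk_inr, cylJ_mk_inl, Prod.mk.injEq] at hjv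
    exact absurd hjv.2.symm hp

end Cylinder

theorem pushoutGraph_not_adj_of_isRight_of_isLeft {A B C : Type} (GB : LoopGraph B)
    (GC : LoopGraph C) (i : A → B) (f : A → C) {x y : Pushout i f}
    (hx : ∀ u, Quot.mk _ u = x → u.isRight) (hy : ∀ v, Quot.mk _ v = y → v.isLeft) :
    ¬ (pushoutGraph GB GC i f).adj x y := by
  rintro ⟨u, v, hu, hv, ⟨b, b', rfl, -, -⟩ | ⟨c, c', -, rfl, -⟩⟩
  · simpa using hx _ hu
  · simpa using hy _ hv

theorem pathI_adj_zero_one (n : ℕ) : (pathI n).adj 0 1 := by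
  refine ⟨by simp, ?_⟩
  simpa [Fin.val_one'] using Nat.mod_le 1 (n + 1)

theorem stmt1_general {A B : Type} (GA : LoopGraph A) (GB : LoopGraph B) (i : A → B)
    (h : ∃ (a : A) (b : B), b ∉ Set.range i ∧ GB.adj (i a) b)
    (n : ℕ) (hn : 1 ≤ n) :
    ¬ ∃ r : B × Fin (n + 1) → Pushout (cyl0 (A := A) n) i,
        IsGraphHom (GB.prod (pathI n)) (pushoutGraph (GA.prod (pathI n)) GB (cyl0 n) i) r ∧
          ∀ x, r (cylJ i n x) = x := by
  rintro ⟨r, hr, hrj⟩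
  obtain ⟨a, b, hb, hab⟩ := h
  have hedge : (GB.prod (pathI n)).adj (b, 0) (i a, 1) :=
    ⟨GB.symm hab, pathI_adj_zero_one n⟩
  have hone : (1 : Fin (n + 1)) ≠ 0 := by
    have : NeZero n := ⟨by omega⟩
    exact one_ne_zero
  have hrb : r (b, 0) = Quot.mk _ (Sum.inr b) := hrj (Quot.mk _ (Sum.inr b))
  have hra : r (i a, 1) = Quot.mk _ (Sum.inl (a, 1)) := hrj (Quot.mk _ (Sum.inl (a, 1)))
  have hadj := hr hedge
  rw [hrb, hra] at hadj
  exact pushoutGraph_not_adj_of_isRight_of_isLeft _ _ _ _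
    (fun _ => Pushout.isRight_of_mk_eq_mk_inr hb)
    (fun _ => Pushout.isLeft_of_mk_eq_mk_inl hone) hadj

/-- if some vertex of `B` outside the image of `i` is adjacent to a vertex `i a`,
then for every `n ≥ 1` there is no retraction `r : B × I_n → (A × I_n) ⊔_i B` with `r ∘ j = id`. -/
theorem stmt1 {A B : Type} (GA : LoopGraph A) (GB : LoopGraph B) (i : A → B)
    (hi : IsGraphHom GA GB i)
    (h : ∃ (a : A) (b : B), b ∉ Set.range i ∧ GB.adj (i a) b)
    (n : ℕ) (hn : 1 ≤ n) :
    ¬ ∃ r : B × Fin (n + 1) → Pushout (cyl0 (A := A) n) i,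
        IsGraphHom (GB.prod (pathI n)) (pushoutGraph (GA.prod (pathI n)) GB (cyl0 n) i) r ∧
          ∀ x, r (cylJ i n x) = x :=
  stmt1_general GA GB i h n hn
end

section
/- There is no model structure (W, C, F) on the category of finite graphs in which W is the class of ×-homotopy equivalences and C is the class of graph maps having the homotopy extension property. -/
/-- The class of graph maps of finite graphs having the homotopy extension property. -/
def Chep : MorClass := fun A B f => IsGraphHom A.G B.G f ∧ ∀ n : ℕ, HEP A.G B.G f n


/-!
Factor the map from the looped point to the looped end `0` of the path `0 - 1 - 2` (looped at
both ends) as a cofibration `c` followed by an acyclic fibration `p`. The homotopy extension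
property pushes along a homotopy into the cone on the image of `c`, which forces `c` to hit an
isolated looped vertex `z₀`. A homotopy inverse `q` of `p` then collapses the path onto `z₀`,
so the identity of the path is homotopic to the constant map at `0`. But along a homotopy a
looped vertex moves through looped vertices, and the only looped neighbour of `0` is `0`
itself, so the looped end `2` cannot be moved to `0`.
-/

namespace LoopGraph

variable {V W : Type}

/-- `S` is a union of connected components of `G`. -/
def NeighborClosed (G : LoopGraph V) (S : Set V) : Prop :=
  ∀ ⦃x y : V⦄, G.adj x y → x ∈ S → y ∈ S

def cone (G : LoopGraph V) (S : Set V) : LoopGraph (Option V) where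
  adj
    | some x, some y => G.adj x y
    | none, none => True
    | none, some y => y ∈ S
    | some x, none => x ∈ S
  symm {x y} h := by
    cases x <;> cases y
    exacts [h, h, h, G.symm h]

theorem Connected.mem_of_neighborClosed {G : LoopGraph V} {H : LoopGraph W} (hG : G.Connected)
    {f : V → W} (hf : IsGraphHom G H f) {S : Set W} (hS : H.NeighborClosed S) {x : V}
    (hx : f x ∈ S) (y : V) : f y ∈ S := by
  induction hG x y with
  | refl => exact hx
  | tail _ hbc ih => exact hS (hf hbc) ih

end LoopGraph

open LoopGraph

theorem neighborClosed_range_of_hep {A B : Type} {GA : LoopGraph A} {GB : LoopGraph B}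
    {i : A → B} (hi : IsGraphHom GA GB i) (hep : HEP GA GB i 1) :
    GB.NeighborClosed (Set.range i) := by
  rintro _ y hxy ⟨a, rfl⟩
  -- Slide the image of `i` onto the apex of the cone while keeping `B` fixed at time `0`.
  let F : A × Fin 2 → Option B := fun p => if p.2 = 0 then some (i p.1) else none
  have hF : IsGraphHom (GA.prod (pathI 1)) (GB.cone (Set.range i)) F := by
    rintro ⟨a, s⟩ ⟨a', s'⟩ ⟨haa', -⟩
    simp only [F]
    split_ifs <;> first | exact hi haa' | exact Set.mem_range_self _ | trivial
  obtain ⟨G, hG, hG0, hGi⟩ :=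
    hep _ (GB.cone (Set.range i)) (some ∘ i) some (fun _ _ h => hi h) (fun _ _ h => h)
      (fun _ => rfl) F hF (fun _ => if_pos rfl)
  have hedge := hG (x := (i a, 1)) (y := (y, 0)) ⟨hxy, by simp [pathI]⟩
  rwa [hG0, hGi, show F (a, 1) = none by simp [F]] at hedge

/-- Along a homotopy, a looped vertex moves through looped vertices, one edge at a time. -/
theorem Homotopic.mem_iff {V W : Type} {G : LoopGraph V} {H : LoopGraph W} {f g : V → W}
    (hfg : Homotopic G H f g) {S : Set W}
    (hS : ∀ ⦃x y : W⦄, H.adj x y → H.adj y y → x ∈ S → y ∈ S) {v : V} (hv : G.adj v v) :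
    f v ∈ S ↔ g v ∈ S := by
  obtain ⟨n, F, hF, hF0, hFn⟩ := hfg
  have hloop (t : Fin (n + 1)) : H.adj (F (v, t)) (F (v, t)) :=
    hF ⟨hv, Nat.le_succ _, Nat.le_succ _⟩
  suffices ∀ t, F (v, t) ∈ S ↔ F (v, 0) ∈ S by rw [← hF0, ← hFn, this (Fin.last n)]
  intro t
  induction t using Fin.induction with
  | zero => rfl
  | succ t ih =>
    have hstep : H.adj (F (v, t.castSucc)) (F (v, t.succ)) :=
      hF ⟨hv, by simp only [Fin.val_castSucc, Fin.val_succ]; omega,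
        by simp only [Fin.val_castSucc, Fin.val_succ]; omega⟩
    exact ⟨fun h => ih.1 (hS (H.symm hstep) (hloop _) h), fun h => hS hstep (hloop _) (ih.2 h)⟩

abbrev pointGraph : FinGraph := ⟨1, ⟨fun _ _ => True, id⟩⟩

/-- The path `0 - 1 - 2` with loops at `0` and `2`. -/
abbrev bowGraph : FinGraph :=
  ⟨3, ⟨fun x y => ((x : ℕ) + 1 = y ∨ (y : ℕ) + 1 = x) ∨ (x = y ∧ x ≠ 1), by
    intro x y; omega⟩⟩

theorem bowGraph_connected : bowGraph.G.Connected := by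
  have hto0 : ∀ x, Relation.ReflTransGen bowGraph.G.adj x 0 := by
    intro x
    fin_cases x
    · exact .refl
    · exact .single (by decide)
    · exact .head (b := 1) (by decide) (.single (by decide))
  intro x y
  exact (hto0 x).trans <|
    Relation.ReflTransGen.mono (fun _ _ => bowGraph.G.symm) _ _ (hto0 y).swap

theorem bowGraph_looped_neighbor_zero :
    ∀ ⦃x y : Fin 3⦄, bowGraph.G.adj x y → bowGraph.G.adj y y → x ∈ ({0} : Set (Fin 3)) →
      y ∈ ({0} : Set (Fin 3)) := by
  simp only [Set.mem_singleton_iff]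
  decide

/-- there is no model structure on the category of finite graphs whose weak
equivalences are the ×-homotopy equivalences and whose cofibrations are the maps with the
homotopy extension property. -/
theorem stmt3 : ¬ ∃ Fib : MorClass, ModelStructure Whe Chep Fib := by
  rintro ⟨Fib, ms⟩
  obtain ⟨Z, c, p, ⟨hc, hcHEP⟩, -, ⟨-, q, hq, hqp, hpq⟩, hpc⟩ :=
    ms.fact_c_fw pointGraph bowGraph (fun _ => 0) fun _ _ _ =>
      show bowGraph.G.adj 0 0 by decide
  have hz : Z.G.NeighborClosed {c 0} := by
    simpa only [Set.range_unique, Fin.default_eq_zero] using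
      neighborClosed_range_of_hep hc (hcHEP 1)
  have hz_loop : Z.G.adj (c 0) (c 0) := hc trivial
  have hq0 : q 0 = c 0 := by
    have := (hqp.mem_iff (fun _ _ h _ hx => hz h hx) hz_loop).2 rfl
    rwa [Function.comp_apply, hpc] at this
  have hq2 : q 2 = c 0 :=
    bowGraph_connected.mem_of_neighborClosed hq hz (x := 0) hq0 2
  have h20 : (2 : Fin 3) = 0 := by
    refine (hpq.mem_iff bowGraph_looped_neighbor_zero (by decide)).1 ?_
    simp only [Function.comp_apply, hq2, hpc, Set.mem_singleton_iff]
  exact absurd h20 (by decide)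
end

section
/- Let i : A → B be an induced subgraph inclusion and f : A → C any graph map. Then the cobase change i′ : C → G of i along f (where G is the pushout of i and f) is an induced subgraph inclusion. -/
/-!
Because `i` is injective, sending `i a ↦ f a` and fixing every other vertex of `B ⊕ C` is
constant on pushout classes, so each class contains at most one vertex of `C`; this gives
injectivity. If the classes of `c` and `c'` are adjacent through an edge `b b'` of `B`, the same
map shows `b = i a`, `b' = i a'` with `f a = c`, `f a' = c'`; as `i` is induced, `a a'` is an
edge of `A`, so `c c'` is an edge of `C`.
-/

namespace Pushout

variable {A B C : Type} {i : A → B} {f : A → C}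

variable (i f) in
noncomputable def normalize : B ⊕ C → B ⊕ C :=
  Sum.elim (Function.extend i (fun a => Sum.inr (f a)) Sum.inl) Sum.inr

theorem normalize_eq_of_rel (hi : Function.Injective i) {x y : B ⊕ C}
    (h : pushoutRel i f x y) : normalize i f x = normalize i f y := by
  obtain ⟨a, rfl, rfl⟩ := h
  exact hi.extend_apply (fun a => Sum.inr (f a)) Sum.inl a

theorem normalize_eq_of_mk_eq (hi : Function.Injective i) {x y : B ⊕ C}
    (h : Quot.mk (pushoutRel i f) x = Quot.mk (pushoutRel i f) y) :
    normalize i f x = normalize i f y :=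
  congrArg (Quot.lift (normalize i f) fun _ _ => normalize_eq_of_rel hi) h

theorem exists_of_normalize_inl_eq_inr {b : B} {c : C}
    (h : normalize i f (Sum.inl b) = Sum.inr c) : ∃ a, i a = b ∧ f a = c := by
  classical
  simp only [normalize, Sum.elim_inl, Function.extend_def] at h
  split_ifs at h with hb
  exact ⟨hb.choose, hb.choose_spec, Sum.inr_injective h⟩

theorem cobase_injective (hi : Function.Injective i) : Function.Injective (cobase i f) :=
  fun _ _ h => Sum.inr_injective (normalize_eq_of_mk_eq hi h)

theorem adj_of_adj_cobase {GA : LoopGraph A} {GB : LoopGraph B} {GC : LoopGraph C}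
    (hi : Function.Injective i) (hi_reflect : ∀ a a', GB.adj (i a) (i a') → GA.adj a a')
    (hf : IsGraphHom GA GC f) {c c' : C}
    (h : (pushoutGraph GB GC i f).adj (cobase i f c) (cobase i f c')) : GC.adj c c' := by
  obtain ⟨u, v, hu, hv, huv⟩ := h
  have hu' := normalize_eq_of_mk_eq hi hu
  have hv' := normalize_eq_of_mk_eq hi hv
  rcases huv with ⟨b, b', rfl, rfl, hbb'⟩ | ⟨d, d', rfl, rfl, hdd'⟩
  · obtain ⟨a, rfl, rfl⟩ := exists_of_normalize_inl_eq_inr hu'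
    obtain ⟨a', rfl, rfl⟩ := exists_of_normalize_inl_eq_inr hv'
    exact hf (hi_reflect a a' hbb')
  · obtain rfl := Sum.inr_injective hu'
    obtain rfl := Sum.inr_injective hv'
    exact hdd'

end Pushout

theorem stmt5_general {A B C : Type} (GA : LoopGraph A) (GB : LoopGraph B) (GC : LoopGraph C)
    (i : A → B) (f : A → C)
    (hf : IsGraphHom GA GC f)
    (hind : Function.Injective i ∧ ∀ a a' : A, GA.adj a a' ↔ GB.adj (i a) (i a')) :
    Function.Injective (cobase i f) ∧
      ∀ c c' : C, GC.adj c c' ↔ (pushoutGraph GB GC i f).adj (cobase i f c) (cobase i f c') := by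
  obtain ⟨hi, hi_induced⟩ := hind
  refine ⟨Pushout.cobase_injective hi, fun c c' => ⟨fun h => ?_, ?_⟩⟩
  · exact ⟨Sum.inr c, Sum.inr c', rfl, rfl, Or.inr ⟨c, c', rfl, rfl, h⟩⟩
  · exact Pushout.adj_of_adj_cobase hi (fun a a' => (hi_induced a a').2) hf

/-- the cobase change of an induced subgraph inclusion is an induced subgraph
inclusion. -/
theorem stmt5 {A B C : Type} (GA : LoopGraph A) (GB : LoopGraph B) (GC : LoopGraph C)
    (i : A → B) (f : A → C)
    (hi : IsGraphHom GA GB i) (hf : IsGraphHom GA GC f)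
    (hind : Function.Injective i ∧ ∀ a a' : A, GA.adj a a' ↔ GB.adj (i a) (i a')) :
    Function.Injective (cobase i f) ∧
      ∀ c c' : C, GC.adj c c' ↔ (pushoutGraph GB GC i f).adj (cobase i f c) (cobase i f c') :=
  stmt5_general GA GB GC i f hf hind
end

section
/- Let X be a connected graph containing at least one edge, let Y be a connected graph, and let p : X → Y be a graph map having the right lifting property with respect to every unfold. Then p is surjective on vertices of Y, and moreover for every edge y₁y₂ ∈ E(Y) there exist x₁, x₂ ∈ V(X) with x₁x₂ ∈ E(X), p(x₁) = y₁ and p(x₂) = y₂. -/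
/-!
Doubling one endpoint of an edge is an unfold `K2 → P3`. Lifting against it shows that if `x₁` is
not isolated, every neighbour of `p x₁` lifts to a neighbour of `x₁`, and that lift is again not
isolated. Starting from an edge of `X`, lifts can thus be propagated along paths of the connected
graph `Y`, reaching every vertex and every edge.
-/

def LoopGraph.K2 : LoopGraph (Fin 2) where
  adj x y := x ≠ y
  symm := Ne.symm

def LoopGraph.P3 : LoopGraph (Fin 3) where
  adj x y := (x = 0 ∨ y = 0) ∧ x ≠ y
  symm := fun ⟨h, hne⟩ => ⟨h.symm, hne.symm⟩

/-- `P3` doubles the endpoint `1` of the edge `K2`: `N(2) = {0} = N(1)`. -/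
lemma isUnfold_K2_P3 : IsUnfold LoopGraph.K2 LoopGraph.P3 Fin.castSucc := by
  refine ⟨Fin.castSucc_injective 2, by simp only [LoopGraph.K2, LoopGraph.P3]; decide, Fin.last 2,
    ?_, ?_, 1, by simp only [LoopGraph.P3]; decide⟩
  · rintro ⟨a, ha⟩
    exact Fin.castSucc_ne_last a ha
  · intro b hb
    by_contra hne
    exact hb ⟨b.castPred hne, Fin.castSucc_castPred b hne⟩

lemma RLPunfolds.exists_adj_lift {X Y : Type} {GX : LoopGraph X} {GY : LoopGraph Y} {p : X → Y}
    (hp : IsGraphHom GX GY p) (hrlp : RLPunfolds GX GY p)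
    {x₁ x₂ : X} (hx : GX.adj x₁ x₂) {y : Y} (hy : GY.adj (p x₁) y) :
    ∃ x₃ : X, GX.adj x₁ x₃ ∧ p x₃ = y := by
  have hf : IsGraphHom LoopGraph.K2 GX ![x₁, x₂] := by
    intro a b hab
    fin_cases a <;> fin_cases b <;> simp_all [LoopGraph.K2, GX.symm hx]
  have hg : IsGraphHom LoopGraph.P3 GY ![p x₁, p x₂, y] := by
    rintro a b ⟨hab, hne⟩
    fin_cases a <;> fin_cases b <;> simp_all [hp hx, GY.symm (hp hx), GY.symm hy]
  obtain ⟨h, hh, hhi, hph⟩ := hrlp _ _ _ _ _ isUnfold_K2_P3 ![x₁, x₂] ![p x₁, p x₂, y] hf hg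
    (by intro a; fin_cases a <;> rfl)
  have h0 : h 0 = x₁ := hhi 0
  exact ⟨h 2, h0 ▸ hh (show LoopGraph.P3.adj 0 2 by simp only [LoopGraph.P3]; decide), hph 2⟩

lemma RLPunfolds.exists_lift_of_reflTransGen {X Y : Type} {GX : LoopGraph X} {GY : LoopGraph Y}
    {p : X → Y} (hp : IsGraphHom GX GY p) (hrlp : RLPunfolds GX GY p)
    {x₀ x₀' : X} (hx₀ : GX.adj x₀ x₀') {y : Y} (hpath : Relation.ReflTransGen GY.adj (p x₀) y) :
    ∃ x : X, p x = y ∧ ∃ w : X, GX.adj x w := by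
  induction hpath with
  | refl => exact ⟨x₀, rfl, x₀', hx₀⟩
  | tail _ hadj ih =>
    obtain ⟨x, rfl, w, hxw⟩ := ih
    obtain ⟨x', hxx', rfl⟩ := hrlp.exists_adj_lift hp hxw hadj
    exact ⟨x', rfl, x, GX.symm hxx'⟩

theorem stmt7_general {X Y : Type} (GX : LoopGraph X) (GY : LoopGraph Y)
    (hXe : ∃ x x' : X, GX.adj x x') (hY : GY.Connected)
    (p : X → Y) (hp : IsGraphHom GX GY p) (hrlp : RLPunfolds GX GY p) :
    Function.Surjective p ∧
      ∀ y₁ y₂ : Y, GY.adj y₁ y₂ → ∃ x₁ x₂ : X, GX.adj x₁ x₂ ∧ p x₁ = y₁ ∧ p x₂ = y₂ := by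
  obtain ⟨x₀, x₀', hx₀⟩ := hXe
  have hlift : ∀ y : Y, ∃ x : X, p x = y ∧ ∃ w : X, GX.adj x w := fun y =>
    hrlp.exists_lift_of_reflTransGen hp hx₀ (hY (p x₀) y)
  refine ⟨fun y => (hlift y).imp fun _ h => h.1, fun y₁ y₂ hy => ?_⟩
  obtain ⟨x₁, rfl, w, hx₁w⟩ := hlift y₁
  obtain ⟨x₂, hx₁₂, rfl⟩ := hrlp.exists_adj_lift hp hx₁w hy
  exact ⟨x₁, x₂, hx₁₂, rfl, rfl⟩

/-- a graph map between connected graphs (the source having an edge) with the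
right lifting property with respect to every unfold is surjective on vertices and edges. -/
theorem stmt7 {X Y : Type} (GX : LoopGraph X) (GY : LoopGraph Y)
    (hX : GX.Connected) (hXe : ∃ x x' : X, GX.adj x x') (hY : GY.Connected)
    (p : X → Y) (hp : IsGraphHom GX GY p) (hrlp : RLPunfolds GX GY p) :
    Function.Surjective p ∧
      ∀ y₁ y₂ : Y, GY.adj y₁ y₂ → ∃ x₁ x₂ : X, GX.adj x₁ x₂ ∧ p x₁ = y₁ ∧ p x₂ = y₂ :=
  stmt7_general GX GY hXe hY p hp hrlp
end

section
/- Let X and Y be finite connected graphs and let p : X → Y be a ×-homotopy equivalence having the right lifting property with respect to every unfold. Then X folds to Y: there is a finite sequence of fold maps reducing X to an induced subgraph X′ of X such that the restriction of p to X′ is an isomorphism of graphs onto Y. -/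
/-!
Lifting the homotopy `p ∘ g ≃ id` along `p`, one unfold at a time, gives a section `s` of `p`
and a walk of graph maps from `id` to `s ∘ p`. The image of that walk in `Y`, run forth and back,
is contracted by an explicit square; lifting the square yields a walk from `id` to `s ∘ p`
through maps over `p`. The first step of such a walk moves each vertex to a vertex dominating it,
so these vertices can be folded away one at a time; then the step is dropped, and in the end
`X` has been folded onto the image of `s`, on which `p` is an isomorphism.
-/

def seqAppend {α : Type} (c : ℕ → α) (n : ℕ) (d : ℕ → α) : ℕ → α :=
  fun t => if t ≤ n then c t else d (t - n)

section SeqAppend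

variable {α : Type} {c d : ℕ → α} {n : ℕ}

@[simp] theorem seqAppend_zero : seqAppend c n d 0 = c 0 := by simp [seqAppend]

theorem seqAppend_add (h : c n = d 0) (m : ℕ) : seqAppend c n d (n + m) = d m := by
  unfold seqAppend
  split_ifs with hm
  · obtain rfl : m = 0 := by omega
    simpa using h
  · simp

theorem forall_seqAppend {P : α → Prop} (hc : ∀ t, P (c t)) (hd : ∀ t, P (d t)) (t : ℕ) :
    P (seqAppend c n d t) := by
  unfold seqAppend
  split_ifs
  exacts [hc t, hd _]

end SeqAppend

section Walks

variable {U V W : Type} {F : LoopGraph U} {G : LoopGraph V} {H : LoopGraph W}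

def MapAdj (G : LoopGraph V) (H : LoopGraph W) (f g : V → W) : Prop :=
  ∀ ⦃x y : V⦄, G.adj x y → H.adj (f x) (g y)

theorem MapAdj.symm {f g : V → W} (h : MapAdj G H f g) : MapAdj G H g f :=
  fun _ _ hxy => H.symm (h (G.symm hxy))

def IsGraphHomOn (G : LoopGraph V) (H : LoopGraph W) (S : Set V) (f : V → W) : Prop :=
  ∀ ⦃x⦄, x ∈ S → ∀ ⦃y⦄, y ∈ S → G.adj x y → H.adj (f x) (f y)

/-- A walk in the exponential graph `H ^ G`, indexed by all of `ℕ`: one from `f` to `g` is a walk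
`c` with `c 0 = f` and `c n = g` for some `n`. -/
structure IsMapWalk (G : LoopGraph V) (H : LoopGraph W) (c : ℕ → V → W) : Prop where
  hom : ∀ t, IsGraphHom G H (c t)
  adj : ∀ t, MapAdj G H (c t) (c (t + 1))

namespace IsMapWalk

variable {c d : ℕ → V → W}

theorem mapAdj_of_dist_le_one (hc : IsMapWalk G H c) {i j : ℕ} (h : Nat.dist i j ≤ 1) :
    MapAdj G H (c i) (c j) := by
  unfold Nat.dist at h
  rcases show i = j ∨ j = i + 1 ∨ i = j + 1 by omega with rfl | rfl | rfl
  · exact hc.hom i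
  · exact hc.adj i
  · exact (hc.adj j).symm

theorem reverse (hc : IsMapWalk G H c) (n : ℕ) : IsMapWalk G H (fun t => c (n - t)) :=
  ⟨fun t => hc.hom (n - t), fun t => hc.mapAdj_of_dist_le_one (by unfold Nat.dist; omega)⟩

theorem comp_left (hc : IsMapWalk G H c) {φ : W → U} (hφ : IsGraphHom H F φ) :
    IsMapWalk G F (fun t => φ ∘ c t) :=
  ⟨fun t _ _ h => hφ (hc.hom t h), fun t _ _ h => hφ (hc.adj t h)⟩

theorem comp_left_of_mapsTo (hc : IsMapWalk G H c) {S : Set W} (hS : ∀ t x, c t x ∈ S)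
    {φ : W → U} (hφ : IsGraphHomOn H F S φ) : IsMapWalk G F (fun t => φ ∘ c t) :=
  ⟨fun t _ _ h => hφ (hS t _) (hS t _) (hc.hom t h),
    fun t _ _ h => hφ (hS t _) (hS (t + 1) _) (hc.adj t h)⟩

theorem comp_right (hc : IsMapWalk G H c) {ψ : U → V} (hψ : IsGraphHom F G ψ) :
    IsMapWalk F H (fun t => c t ∘ ψ) :=
  ⟨fun t _ _ h => hc.hom t (hψ h), fun t _ _ h => hc.adj t (hψ h)⟩

theorem seqAppend (hc : IsMapWalk G H c) (hd : IsMapWalk G H d) {n : ℕ} (h : c n = d 0) :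
    IsMapWalk G H (_root_.seqAppend c n d) := by
  refine ⟨forall_seqAppend hc.hom hd.hom, fun t => ?_⟩
  unfold _root_.seqAppend
  by_cases htn : t + 1 ≤ n
  · simpa [htn, show t ≤ n by omega] using hc.adj t
  · by_cases ht : t = n
    · subst ht
      simpa [h] using hd.adj 0
    · simpa [htn, show ¬t ≤ n by omega, show t + 1 - n = t - n + 1 by omega] using hd.adj (t - n)

theorem prod_pathI (hc : IsMapWalk G H c) (m : ℕ) {ρ : ℕ → ℕ → ℕ}
    (hρ : ∀ u u' t t', Nat.dist u u' ≤ 1 → Nat.dist t t' ≤ 1 → Nat.dist (ρ u t) (ρ u' t') ≤ 1) :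
    IsMapWalk (G.prod (pathI m)) H (fun u z => c (ρ u z.2) z.1) := by
  have key : ∀ u u', Nat.dist u u' ≤ 1 →
      MapAdj (G.prod (pathI m)) H (fun z => c (ρ u z.2) z.1) (fun z => c (ρ u' z.2) z.1) := by
    rintro u u' hu ⟨x, t⟩ ⟨y, t'⟩ ⟨hxy, ht⟩
    refine hc.mapAdj_of_dist_le_one (hρ u u' t t' hu ?_) hxy
    simp only [pathI, Nat.dist] at ht ⊢
    omega
  exact ⟨fun u => key u u (by simp), fun u => key u (u + 1) (by simp [Nat.dist])⟩

theorem slice {m : ℕ} {c : ℕ → V × Fin (m + 1) → W} (hc : IsMapWalk (G.prod (pathI m)) H c)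
    (t : Fin (m + 1)) : IsMapWalk G H (fun u x => c u (x, t)) := by
  have ht : (pathI m).adj t t := ⟨by omega, by omega⟩
  exact ⟨fun u _ _ h => hc.hom u ⟨h, ht⟩, fun u _ _ h => hc.adj u ⟨h, ht⟩⟩

end IsMapWalk

theorem IsGraphHom.isMapWalk_curry {m : ℕ} {Φ : V × Fin (m + 1) → W}
    (hΦ : IsGraphHom (G.prod (pathI m)) H Φ) :
    IsMapWalk G H (fun t x => Φ (x, Fin.clamp t m)) := by
  refine ⟨fun t _ _ h => hΦ ⟨h, ?_⟩, fun t _ _ h => hΦ ⟨h, ?_⟩⟩ <;>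
    simp only [pathI, Fin.clamp] <;> omega

theorem Homotopic.exists_isMapWalk {f g : V → W} (h : Homotopic G H f g) :
    ∃ c n, IsMapWalk G H c ∧ c 0 = f ∧ c n = g := by
  obtain ⟨n, Φ, hΦ, h0, hn⟩ := h
  refine ⟨_, n, hΦ.isMapWalk_curry, funext fun x => ?_, funext fun x => ?_⟩
  · simpa [Fin.clamp] using h0 x
  · simpa [Fin.clamp, Fin.last] using hn x

end Walks

def LoopGraph.comap {V W : Type} (G : LoopGraph W) (f : V → W) : LoopGraph V :=
  ⟨fun x y => G.adj (f x) (f y), G.symm⟩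

namespace RLPunfolds

variable {X Y V : Type} {GX : LoopGraph X} {GY : LoopGraph Y} {p : X → Y}

/-- Adding to `S` a vertex `v` dominated by a vertex of `S` is an unfold, so a lift over `S`
extends to `v`. -/
theorem exists_lift_insert [DecidableEq V] (hrlp : RLPunfolds GX GY p) {G : LoopGraph V}
    {S : Set V} {v v' : V} (hv : v ∉ S) (hv' : v' ∈ S)
    (hdom : ∀ x ∈ insert v S, G.adj v x → G.adj v' x)
    {f : V → X} (hf : IsGraphHomOn G GX S f) {g : V → Y} (hg : IsGraphHomOn G GY (insert v S) g)
    (hfg : ∀ x ∈ S, p (f x) = g x) :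
    ∃ x₀, p x₀ = g v ∧ IsGraphHomOn G GX (insert v S) (Function.update f v x₀) := by
  let i : S → ↥(insert v S) := Set.inclusion (Set.subset_insert v S)
  have hi : IsUnfold (G.comap ((↑) : S → V)) (G.comap ((↑) : ↥(insert v S) → V)) i := by
    refine ⟨Set.inclusion_injective _, fun _ _ => Iff.rfl, ⟨v, Set.mem_insert v S⟩, ?_, ?_,
      ⟨v', hv'⟩, fun b hb => hdom b b.2 hb⟩
    · rintro ⟨a, ha⟩
      have : (a : V) = v := congrArg Subtype.val ha
      exact hv (this ▸ a.2)
    · rintro ⟨b, hb⟩ hbi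
      rcases hb with rfl | hb
      · rfl
      · exact absurd ⟨⟨b, hb⟩, rfl⟩ hbi
  obtain ⟨h, hh, hhi, hph⟩ := hrlp _ _ _ _ i hi (fun a => f a) (fun b => g b)
    (fun a b hab => hf a.2 b.2 hab) (fun a b hab => hg a.2 b.2 hab) (fun a => hfg a a.2)
  have hupdate : ∀ x (hx : x ∈ insert v S), Function.update f v (h ⟨v, Set.mem_insert v S⟩) x
      = h ⟨x, hx⟩ := by
    intro x hx
    by_cases hxv : x = v
    · subst hxv; simp
    · rw [Function.update_of_ne hxv]
      exact (hhi ⟨x, hx.resolve_left hxv⟩).symm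
  refine ⟨h ⟨v, Set.mem_insert v S⟩, hph _, fun x hx y hy hxy => ?_⟩
  rw [hupdate x hx, hupdate y hy]
  exact hh hxy

theorem exists_lift_of_dominated [Finite V] (hrlp : RLPunfolds GX GY p) {G : LoopGraph V}
    {S : Set V} (hdom : ∀ v ∉ S, ∃ v' ∈ S, ∀ x, G.adj v x → G.adj v' x)
    {f : V → X} (hf : IsGraphHomOn G GX S f) {g : V → Y} (hg : IsGraphHom G GY g)
    (hfg : ∀ x ∈ S, p (f x) = g x) :
    ∃ f' : V → X, IsGraphHom G GX f' ∧ (∀ x ∈ S, f' x = f x) ∧ ∀ x, p (f' x) = g x := by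
  classical
  have : Fintype V := Fintype.ofFinite V
  suffices ∀ K : Finset V, ∃ f' : V → X, IsGraphHomOn G GX (S ∪ K) f' ∧ (∀ x ∈ S, f' x = f x) ∧
      ∀ x ∈ S ∪ K, p (f' x) = g x by
    obtain ⟨f', hf', hff', hpf'⟩ := this Finset.univ
    exact ⟨f', fun x y hxy => hf' (by simp) (by simp) hxy, hff', fun x => hpf' x (by simp)⟩
  intro K
  induction K using Finset.induction_on with
  | empty => exact ⟨f, by simpa using hf, fun _ _ => rfl, by simpa using hfg⟩
  | @insert v K _ ih =>
    obtain ⟨f', hf', hff', hpf'⟩ := ih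
    have hSK : S ∪ ↑(insert v K) = insert v (S ∪ ↑K) := by
      ext; simp only [Finset.coe_insert, Set.mem_union, Set.mem_insert_iff]; tauto
    rw [hSK]
    by_cases hv : v ∈ S ∪ K
    · rw [Set.insert_eq_of_mem hv]
      exact ⟨f', hf', hff', hpf'⟩
    obtain ⟨v', hv'S, hvv'⟩ := hdom v fun h => hv (Or.inl h)
    obtain ⟨x₀, hpx₀, hx₀⟩ := hrlp.exists_lift_insert hv (Or.inl hv'S) (fun x _ => hvv' x) hf'
      (fun x _ y _ hxy => hg hxy) hpf'
    refine ⟨_, hx₀, fun x hx => ?_, fun x hx => ?_⟩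
    · have hxv : x ≠ v := by rintro rfl; exact hv (Or.inl hx)
      rw [Function.update_of_ne hxv, hff' x hx]
    · by_cases hxv : x = v
      · subst hxv; simpa using hpx₀
      · rw [Function.update_of_ne hxv]
        exact hpf' x (hx.resolve_left hxv)

theorem exists_lift_mapAdj {Z : Type} [Finite Z] (hrlp : RLPunfolds GX GY p) {GZ : LoopGraph Z}
    {H H' : Z → Y} (hH : IsGraphHom GZ GY H) (hH' : IsGraphHom GZ GY H') (hHH' : MapAdj GZ GY H H')
    {h : Z → X} (hh : IsGraphHom GZ GX h) (hph : ∀ z, p (h z) = H z) :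
    ∃ h', IsGraphHom GZ GX h' ∧ MapAdj GZ GX h h' ∧ ∀ z, p (h' z) = H' z := by
  -- the cylinder `Z × I_1`; it grows from `Z × {false}` by adding each `(z, true)`, which is
  -- dominated by `(z, false)`
  let G : LoopGraph (Z × Bool) := GZ.comap Prod.fst
  have hg : IsGraphHom G GY (fun w => cond w.2 (H' w.1) (H w.1)) := by
    rintro ⟨z, _ | _⟩ ⟨z', _ | _⟩ hzz'
    exacts [hH hzz', hHH' hzz', hHH'.symm hzz', hH' hzz']
  obtain ⟨F, hF, hFh, hpF⟩ :=
    hrlp.exists_lift_of_dominated (G := G) (S := {w : Z × Bool | w.2 = false})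
    (fun v _ => ⟨(v.1, false), rfl, fun _ hx => hx⟩) (f := fun w => h w.1)
    (fun _ _ _ _ hxy => hh hxy) hg (fun w (hw : w.2 = false) => by simp [hw, hph])
  refine ⟨fun z => F (z, true), fun z z' hzz' => hF (show G.adj (z, true) (z', true) from hzz'),
    fun z z' hzz' => ?_, fun z => hpF (z, true)⟩
  rw [← hFh (z, false) rfl]
  exact hF (show G.adj (z, false) (z', true) from hzz')

theorem exists_lift_isMapWalk {Z : Type} [Finite Z] (hrlp : RLPunfolds GX GY p)
    {GZ : LoopGraph Z} {H : ℕ → Z → Y} (hH : IsMapWalk GZ GY H)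
    {h : Z → X} (hh : IsGraphHom GZ GX h) (hph : ∀ z, p (h z) = H 0 z) :
    ∃ c, IsMapWalk GZ GX c ∧ c 0 = h ∧ ∀ t z, p (c t z) = H t z := by
  have step : ∀ t (h : Z → X), IsGraphHom GZ GX h ∧ (∀ z, p (h z) = H t z) →
      ∃ h', (IsGraphHom GZ GX h' ∧ ∀ z, p (h' z) = H (t + 1) z) ∧ MapAdj GZ GX h h' :=
    fun t h ⟨hh, hph⟩ =>
      let ⟨h', hh', hhh', hph'⟩ :=
        hrlp.exists_lift_mapAdj (hH.hom t) (hH.hom (t + 1)) (hH.adj t) hh hph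
      ⟨h', ⟨hh', hph'⟩, hhh'⟩
  choose! next hnext hadj using step
  let c : ℕ → Z → X := fun t => Nat.rec h next t
  have hc : ∀ t, IsGraphHom GZ GX (c t) ∧ ∀ z, p (c t z) = H t z := by
    intro t
    induction t with
    | zero => exact ⟨hh, hph⟩
    | succ t ih => exact hnext t (c t) ih
  exact ⟨c, ⟨fun t => (hc t).1, fun t => hadj t (c t) (hc t)⟩, rfl, fun t => (hc t).2⟩

end RLPunfolds

theorem isGraphHomOn_update_id {V : Type} [DecidableEq V] {G : LoopGraph V} {T : Set V}
    {a b : V} (hb : b ∈ T) (hdom : ∀ x ∈ T, G.adj a x → G.adj b x) :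
    IsGraphHomOn G G T (Function.update id a b) := by
  intro x hx y hy hxy
  simp only [Function.update_apply, id]
  split_ifs with hxa hya hya
  · subst hxa
    rw [hya] at hxy
    exact hdom b hb (G.symm (hdom x hx hxy))
  · exact hdom y hy (hxa ▸ hxy)
  · exact G.symm (hdom x hx (G.symm (hya ▸ hxy)))
  · exact hxy

section Folding

variable {X Y : Type} {GX : LoopGraph X} {GY : LoopGraph Y} {p : X → Y}

structure IsFibrewiseRetractionWalk (GX : LoopGraph X) (p : X → Y) (T : Set X) (c : ℕ → X → X) :
    Prop where
  isMapWalk : IsMapWalk GX GX c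
  mapsTo : ∀ t x, c t x ∈ T
  fibre : ∀ t x, p (c t x) = p x
  retract : ∀ x ∈ T, c 0 x = x

namespace IsFibrewiseRetractionWalk

variable {T : Set X} {c : ℕ → X → X}

theorem shift (hc : IsFibrewiseRetractionWalk GX p T c) (h1 : ∀ x ∈ T, c 1 x = x) :
    IsFibrewiseRetractionWalk GX p T (fun t => c (t + 1)) :=
  ⟨⟨fun t => hc.isMapWalk.hom (t + 1), fun t => hc.isMapWalk.adj (t + 1)⟩,
    fun t => hc.mapsTo (t + 1), fun t => hc.fibre (t + 1), h1⟩

theorem adj_apply_one (hc : IsFibrewiseRetractionWalk GX p T c) {a x : X} (hx : x ∈ T)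
    (hax : GX.adj a x) : GX.adj (c 1 a) x := by
  have := hc.isMapWalk.adj 0 (GX.symm hax)
  rw [hc.retract x hx] at this
  exact GX.symm this

theorem foldsTo_diff (hc : IsFibrewiseRetractionWalk GX p T c) (hT : FoldsTo GX T) {a : X}
    (ha : a ∈ T) (hne : c 1 a ≠ a) : FoldsTo GX (T \ {a}) :=
  FoldsTo.step hT ha (hc.mapsTo 1 a) hne.symm fun _ hx hax => hc.adj_apply_one hx hax

theorem collapse [DecidableEq X] (hc : IsFibrewiseRetractionWalk GX p T c) {a : X} (ha : a ∈ T)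
    (hne : c 1 a ≠ a) :
    IsFibrewiseRetractionWalk GX p (T \ {a}) (fun t => Function.update id a (c 1 a) ∘ c t) := by
  have hρ : ∀ x ∈ T, Function.update id a (c 1 a) x ∈ T \ {a} := by
    intro x hx
    rcases eq_or_ne x a with rfl | hxa
    · simpa using ⟨hc.mapsTo 1 x, hne⟩
    · simpa [hxa] using hx
  refine ⟨hc.isMapWalk.comp_left_of_mapsTo hc.mapsTo
      (isGraphHomOn_update_id (hc.mapsTo 1 a) fun _ hx hax => hc.adj_apply_one hx hax),
    fun t x => hρ _ (hc.mapsTo t x), fun t x => ?_, fun x hx => ?_⟩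
  · rcases eq_or_ne (c t x) a with hx | hxa
    · simp [hx, hc.fibre, ← hc.fibre t x]
    · simp [hxa, hc.fibre]
  · simp [hc.retract x hx.1, Set.notMem_singleton_iff.mp hx.2]

end IsFibrewiseRetractionWalk

theorem bijOn_and_adj_iff_of_retraction (hp : IsGraphHom GX GY p) {s : Y → X}
    (hs : IsGraphHom GY GX s) (hps : ∀ y, p (s y) = y) {T : Set X} (hsT : ∀ y, s y ∈ T)
    (hsp : ∀ x ∈ T, s (p x) = x) :
    Set.BijOn p T Set.univ ∧ ∀ x ∈ T, ∀ x' ∈ T, (GX.adj x x' ↔ GY.adj (p x) (p x')) := by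
  refine ⟨⟨fun _ _ => Set.mem_univ _, fun x hx x' hx' h => ?_, fun y _ => ⟨s y, hsT y, hps y⟩⟩,
    fun x hx x' hx' => ⟨fun h => hp h, fun h => ?_⟩⟩
  · rw [← hsp x hx, ← hsp x' hx', h]
  · simpa only [hsp x hx, hsp x' hx'] using hs h

/-- Folding away, one at a time, the vertices moved by the first map of the walk, and then
dropping that map, shortens the walk until `T` is the image of the section. -/
theorem exists_foldsTo_of_fibrewiseRetractionWalk [Finite X] (hp : IsGraphHom GX GY p)
    {T : Set X} (hT : FoldsTo GX T) {c : ℕ → X → X} (hc : IsFibrewiseRetractionWalk GX p T c)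
    {s : Y → X} (hs : IsGraphHom GY GX s) (hps : ∀ y, p (s y) = y) {M : ℕ}
    (hcM : ∀ x, c M x = s (p x)) :
    ∃ S : Set X, FoldsTo GX S ∧ Set.BijOn p S Set.univ ∧
      ∀ x ∈ S, ∀ x' ∈ S, (GX.adj x x' ↔ GY.adj (p x) (p x')) := by
  classical
  induction hN : T.ncard + M using Nat.strong_induction_on generalizing T c s M with
  | _ N ih =>
  have hsT : ∀ y, s y ∈ T := fun y => by simpa [hcM, hps] using hc.mapsTo M (s y)
  cases M with
  | zero =>
    refine ⟨T, hT, bijOn_and_adj_iff_of_retraction hp hs hps hsT fun x hx => ?_⟩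
    rw [← hcM, hc.retract x hx]
  | succ M =>
  by_cases h1 : ∀ x ∈ T, c 1 x = x
  · exact ih _ (by omega) hT (hc.shift h1) hs hps hcM rfl
  push Not at h1
  obtain ⟨a, ha, hne⟩ := h1
  have hcard : (T \ {a}).ncard < T.ncard := Set.ncard_sdiff_singleton_lt_of_mem ha
  have hρ := isGraphHomOn_update_id (hc.mapsTo 1 a) fun _ hx hax => hc.adj_apply_one hx hax
  refine ih _ (by omega) (hc.foldsTo_diff hT ha hne) (hc.collapse ha hne)
    (s := Function.update id a (c 1 a) ∘ s) (fun y y' h => hρ (hsT y) (hsT y') (hs h))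
    (fun y => ?_) (M := M + 1) (fun x => by simp [hcM]) rfl
  simpa [hcM, hps] using (hc.collapse ha hne).fibre (M + 1) (s y)

section Lifting

variable {X Y : Type} {GX : LoopGraph X} {GY : LoopGraph Y} {p : X → Y}

theorem IsHtpyEquiv.exists_section [Finite Y] (hp : IsHtpyEquiv GX GY p)
    (hrlp : RLPunfolds GX GY p) :
    ∃ s : Y → X, IsGraphHom GY GX s ∧ (∀ y, p (s y) = y) ∧
      ∃ c n, IsMapWalk GX GX c ∧ c 0 = id ∧ c n = s ∘ p := by
  obtain ⟨hp, g, hg, hgp, hpg⟩ := hp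
  obtain ⟨a, n₁, ha, ha0, ha1⟩ := hgp.exists_isMapWalk
  obtain ⟨b, n₂, hb, hb0, hb1⟩ := hpg.exists_isMapWalk
  obtain ⟨σ, hσ, hσ0, hpσ⟩ := hrlp.exists_lift_isMapWalk hb hg (by simp [hb0])
  have hjoin : a (n₁ - n₁) = σ 0 ∘ p := by simp [ha0, hσ0]
  refine ⟨σ n₂, hσ.hom n₂, fun y => by simp [hpσ, hb1], _, n₁ + n₂,
    (ha.reverse n₁).seqAppend (hσ.comp_right hp) hjoin, by simp [ha1], ?_⟩
  exact seqAppend_add hjoin n₂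

/-- The fibrewise walk runs along the sides `t = 0`, `u = K` and `t = N` of the lifted square. -/
theorem RLPunfolds.exists_fibrewise_walk_of_contraction [Finite X] (hrlp : RLPunfolds GX GY p)
    {e : ℕ → X → X} (he : IsMapWalk GX GX e) {N K : ℕ} {H : ℕ → X × Fin (N + 1) → Y}
    (hH : IsMapWalk (GX.prod (pathI N)) GY H) (hH0 : ∀ z, p (e z.2 z.1) = H 0 z)
    (hfib : ∀ u (t : Fin (N + 1)), (u = K ∨ t = 0 ∨ t = Fin.last N) → ∀ x, H u (x, t) = p x) :
    ∃ d M, IsMapWalk GX GX d ∧ (∀ t x, p (d t x) = p x) ∧ d 0 = e 0 ∧ d M = e N := by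
  obtain ⟨Λ, hΛ, hΛ0, hpΛ⟩ := hrlp.exists_lift_isMapWalk hH
    ((he.prod_pathI N (ρ := fun _ t => t) fun _ _ _ _ _ ht => ht).hom 0) hH0
  have hjoin₁ : (fun x => Λ K (x, 0)) = fun x => Λ K (x, Fin.clamp 0 N) := by
    rw [show Fin.clamp 0 N = 0 from Fin.ext (by simp [Fin.clamp])]
  have hjoin₂ : (fun x => Λ K (x, Fin.clamp N N)) = fun x => Λ (K - 0) (x, Fin.last N) := by
    rw [show Fin.clamp N N = Fin.last N from Fin.ext (by simp [Fin.clamp]), Nat.sub_zero]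
  refine ⟨seqAppend (fun u x => Λ u (x, 0)) K
      (seqAppend (fun t x => Λ K (x, Fin.clamp t N)) N (fun u x => Λ (K - u) (x, Fin.last N))),
    K + (N + K),
    (hΛ.slice 0).seqAppend ((hΛ.hom K).isMapWalk_curry.seqAppend
      ((hΛ.slice (Fin.last N)).reverse K) hjoin₂) hjoin₁,
    fun t x => ?_, ?_, ?_⟩
  · have hfibΛ u t ht : ∀ x, p (Λ u (x, t)) = p x :=
      fun x => (hpΛ u (x, t)).trans (hfib u t ht x)
    exact forall_seqAppend (P := fun f : X → X => ∀ x, p (f x) = p x)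
      (fun u => hfibΛ u 0 (by simp)) (forall_seqAppend (P := fun f : X → X => ∀ x, p (f x) = p x)
        (fun t => hfibΛ K _ (by simp)) (fun u => hfibΛ _ _ (by simp))) t x
  · funext x
    simp [hΛ0]
  · rw [seqAppend_add (by simp [← hjoin₁]), seqAppend_add hjoin₂]
    funext x
    simp [hΛ0]

theorem RLPunfolds.exists_fibrewise_walk [Finite X] (hrlp : RLPunfolds GX GY p)
    (hp : IsGraphHom GX GY p) {s : Y → X} (hs : IsGraphHom GY GX s) (hps : ∀ y, p (s y) = y)
    {c : ℕ → X → X} {L : ℕ} (hc : IsMapWalk GX GX c) (hc0 : c 0 = id) (hcL : c L = s ∘ p) :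
    ∃ d M, IsMapWalk GX GX d ∧ (∀ t x, p (d t x) = p x) ∧ d 0 = id ∧ d M = s ∘ p := by
  have hsp : IsGraphHom GX GX (s ∘ p) := fun _ _ h => hs (hp h)
  -- `e` runs along `c` and back along `s ∘ p ∘ c`: its image in `Y` is the loop `p ∘ c` followed
  -- by its reverse, which the square `(u, t) ↦ p ∘ c (min (min t (2L - t)) (L - u))` contracts.
  have hjoin : c L = (fun t => (s ∘ p) ∘ c (L - t)) 0 := by
    funext x
    simp [hcL, hps]
  set e := seqAppend c L (fun t => (s ∘ p) ∘ c (L - t))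
  have he : IsMapWalk GX GX e := hc.seqAppend ((hc.comp_left hsp).reverse L) hjoin
  have hpe : ∀ t x, p (e t x) = p (c (min t (2 * L - t)) x) := by
    intro t x
    simp only [e, seqAppend]
    split_ifs with ht
    · rw [min_eq_left (by omega)]
    · simp only [Function.comp, hps]
      congr 3
      omega
  have he2L : e (L + L) = s ∘ p :=
    calc e (L + L) = (s ∘ p) ∘ c (L - L) :=
          seqAppend_add (d := fun t => (s ∘ p) ∘ c (L - t)) hjoin L
      _ = s ∘ p := by rw [Nat.sub_self, hc0]; rfl
  obtain ⟨d, M, hd, hpd, hd0, hdM⟩ := hrlp.exists_fibrewise_walk_of_contraction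
    he (K := L)
    ((hc.comp_left hp).prod_pathI (2 * L) (ρ := fun u t => min (min t (2 * L - t)) (L - u))
      fun u u' t t' hu ht => by simp only [Nat.dist] at *; omega)
    (fun z => by
      simp only [hpe, Nat.sub_zero, min_eq_left (show min (z.2 : ℕ) (2 * L - z.2) ≤ L by omega)]
      rfl)
    (fun u t ht x => by
      simp only [Function.comp]
      rw [show min (min (t : ℕ) (2 * L - t)) (L - u) = 0 by
        rcases ht with rfl | rfl | rfl <;> simp]
      simp [hc0])
  refine ⟨d, M, hd, hpd, by simp [hd0, e, hc0], ?_⟩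
  rw [hdM, two_mul, he2L]

end Lifting

theorem stmt9_general {X Y : Type} [Fintype X] [Fintype Y] (GX : LoopGraph X) (GY : LoopGraph Y)
    (p : X → Y) (hp : IsHtpyEquiv GX GY p) (hrlp : RLPunfolds GX GY p) :
    ∃ S : Set X, FoldsTo GX S ∧ Set.BijOn p S Set.univ ∧
      ∀ x ∈ S, ∀ x' ∈ S, (GX.adj x x' ↔ GY.adj (p x) (p x')) := by
  obtain ⟨s, hs, hps, c, L, hc, hc0, hcL⟩ := hp.exists_section hrlp
  obtain ⟨d, M, hd, hpd, hd0, hdM⟩ := hrlp.exists_fibrewise_walk hp.1 hs hps hc hc0 hcL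
  have hdT : IsFibrewiseRetractionWalk GX p Set.univ d :=
    ⟨hd, fun _ _ => Set.mem_univ _, hpd, fun x _ => by rw [hd0]; rfl⟩
  exact exists_foldsTo_of_fibrewiseRetractionWalk hp.1 FoldsTo.univ hdT hs hps
    (fun x => by rw [hdM]; rfl)

/-- a ×-homotopy equivalence between finite connected graphs with the right
lifting property with respect to every unfold exhibits `X` as folding to `Y`: a finite
sequence of folds reduces `X` to an induced subgraph `X'` on which `p` restricts to an
isomorphism onto `Y`. -/
theorem stmt9 {X Y : Type} [Fintype X] [Fintype Y] (GX : LoopGraph X) (GY : LoopGraph Y)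
    (hX : GX.Connected) (hY : GY.Connected)
    (p : X → Y) (hp : IsHtpyEquiv GX GY p) (hrlp : RLPunfolds GX GY p) :
    ∃ S : Set X, FoldsTo GX S ∧ Set.BijOn p S Set.univ ∧
      ∀ x ∈ S, ∀ x' ∈ S, (GX.adj x x' ↔ GY.adj (p x) (p x')) :=
  stmt9_general GX GY p hp hrlp
end Folding
end
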